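/- Let P be a regular perfect-tree forcing notion and S₁,…,S_k ∈ P. Then there is a finite set of pairwise almost disjoint trees R₁,…,R_n ∈ P such that [S₁] ∩ ⋯ ∩ [S_k] = [R₁] ∪ ⋯ ∪ [R_n] (where the union may be empty, i.e. n = 0 is allowed). -/

import Mathlib

noncomputable section

/-- Finite binary strings. -/
abbrev Str : Type := List Bool

/-- Points of Cantor space `2^ω`. -/
abbrev Pt : Type := ℕ → Bool

/-- The length-`n` initial segment of a point of Cantor space, as a string. -/
def seg (a : Pt) (n : ℕ) : Str := (List.range n).map a

/-- A tree: a set of strings closed under initial segments. -/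
def IsTree (T : Set Str) : Prop := ∀ ⦃s t : Str⦄, s <+: t → t ∈ T → s ∈ T

/-- A perfect tree: a nonempty tree in which every string has two
incomparable extensions inside the tree. -/
def IsPerfectTree (T : Set Str) : Prop :=
  T.Nonempty ∧ IsTree T ∧
    ∀ s ∈ T, ∃ t₁ t₂, t₁ ∈ T ∧ t₂ ∈ T ∧ s <+: t₁ ∧ s <+: t₂ ∧ ¬ t₁ <+: t₂ ∧ ¬ t₂ <+: t₁

/-- The restriction `T↾s = {t ∈ T : s ⊆ t or t ⊆ s}`. -/
def Tres (T : Set Str) (s : Str) : Set Str := {t ∈ T | s <+: t ∨ t <+: s}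

/-- The set `[T]` of branches of a tree `T`. -/
def branches (T : Set Str) : Set Pt := {a | ∀ n, seg a n ∈ T}

/-- `s` is the stem (root) of `T`: the longest `s ∈ T` with `T = T↾s`. -/
def IsStem (T : Set Str) (s : Str) : Prop :=
  s ∈ T ∧ T = Tres T s ∧ ∀ t ∈ T, T = Tres T t → t <+: s

open Classical in
/-- The stem `root(T)` of a tree (junk value `[]` if there is none). -/
def stem (T : Set Str) : Str := if h : ∃ s, IsStem T s then h.choose else []

/-- Simple splitting `T→i = T↾(root(T)⌢i)`. -/
def splitOne (T : Set Str) (i : Bool) : Set Str := Tres T (stem T ++ [i])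

/-- Iterated splitting `T→u`. -/
def splitIter (T : Set Str) (u : Str) : Set Str := u.foldl splitOne T

/-- Almost disjointness of trees: finite intersection. -/
def AD (S T : Set Str) : Prop := (S ∩ T).Finite

/-- A perfect-tree forcing notion: a nonempty set of perfect trees closed
under restrictions. -/
def IsPTF (P : Set (Set Str)) : Prop :=
  P.Nonempty ∧ (∀ T ∈ P, IsPerfectTree T) ∧ ∀ T ∈ P, ∀ s ∈ T, Tres T s ∈ P

/-- `A` is relatively clopen in `B` (as a subspace of Cantor space). -/
def ClopenIn (A B : Set Pt) : Prop := IsClopen ((fun x : B => (x : Pt)) ⁻¹' A)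

/-- `A` is relatively open in `B` (as a subspace of Cantor space). -/
def OpenIn (A B : Set Pt) : Prop := IsOpen ((fun x : B => (x : Pt)) ⁻¹' A)

/-- A special perfect-tree forcing notion: `P = {T↾s : s ∈ T ∈ A}` for an
antichain (pairwise a.d. set) `A ⊆ P`. -/
def SpecialPTF (P : Set (Set Str)) : Prop :=
  ∃ A ⊆ P, A.Pairwise AD ∧ P = {R | ∃ T ∈ A, ∃ s ∈ T, R = Tres T s}

/-- A regular perfect-tree forcing notion: `[S] ∩ [T]` is relatively clopen
in `[S]` or in `[T]`, for all `S, T ∈ P`. -/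
def RegularPTF (P : Set (Set Str)) : Prop :=
  ∀ S ∈ P, ∀ T ∈ P,
    ClopenIn (branches S ∩ branches T) (branches S) ∨
    ClopenIn (branches S ∩ branches T) (branches T)

/-- `T ⊆ᶠ ⋃ D`: `[T]` is covered by finitely many `[S]`, `S ∈ D`. -/
def SqFin (T : Set Str) (D : Set (Set Str)) : Prop :=
  ∃ D' ⊆ D, D'.Finite ∧ branches T ⊆ ⋃ S ∈ D', branches S

/-- `P ⊑ Q`: `Q` is a refinement of `P`. -/
def Refines (P Q : Set (Set Str)) : Prop :=
  (∀ T ∈ P, ∃ S ∈ Q, S ⊆ T) ∧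
  (∀ S ∈ Q, SqFin S P) ∧
  (∀ S ∈ Q, ∀ T ∈ P, ClopenIn (branches S ∩ branches T) (branches S) ∧ ¬ T ⊆ S)

/-- `D` is dense in `P`. -/
def DenseIn (D P : Set (Set Str)) : Prop := ∀ T ∈ P, ∃ S ∈ D, S ⊆ T

/-- `D` is pre-dense in `P`. -/
def PreDenseIn (D P : Set (Set Str)) : Prop :=
  DenseIn {T ∈ P | ∃ S ∈ D, T ⊆ S} P

/-- `P ⊑_D Q`: `Q` locks `D` over `P`. -/
def Locks (P D Q : Set (Set Str)) : Prop :=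
  Refines P Q ∧ ∀ S ∈ Q, SqFin S D

/-- A finite splitting system of height `n` over `P`. -/
def IsFSS (P : Set (Set Str)) (n : ℕ) (φ : Str → Set Str) : Prop :=
  (∀ s : Str, s.length ≤ n → φ s ∈ P) ∧
  ∀ (s : Str) (i : Bool), s.length < n → φ (s ++ [i]) ⊆ splitOne (φ s) i

/-!
Regularity makes `[S] ∩ [T]` relatively clopen in the compact set `[S]` (or `[T]`), so membership
in it is decided by the first `N` bits of a branch for a single `N`; the intersection is then the
disjoint union of the finitely many `[S↾s]`, `|s| = N`, that meet it. Intersecting such a disjoint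
union with a further `[S']` decomposes each piece in turn, which gives the induction on `k`.
Finally, trees with disjoint branch sets are almost disjoint: by compactness (König's lemma) an
infinite tree has a branch.
-/

open PiNat

theorem IsCompact.exists_cylinder_subset {E : ℕ → Type*} [∀ n, TopologicalSpace (E n)]
    [∀ n, DiscreteTopology (E n)] {K U : Set (∀ n, E n)} (hK : IsCompact K) (hU : IsOpen U)
    (hKU : K ⊆ U) : ∃ N, ∀ x ∈ K, cylinder x N ⊆ U := by
  have hopen : ∀ N, IsOpen {x | cylinder x N ⊆ U} := fun N =>
    isOpen_iff_forall_mem_open.2 fun x hx =>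
      ⟨cylinder x N, fun y hy => by rwa [Set.mem_ofPred_eq, mem_cylinder_iff_eq.1 hy],
        isOpen_cylinder E x N, self_mem_cylinder x N⟩
  have hcover : K ⊆ ⋃ N, {x | cylinder x N ⊆ U} := fun x hx => by
    obtain ⟨_, ⟨y, n, rfl⟩, hxy, hsub⟩ :=
      (isTopologicalBasis_cylinders E).exists_subset_of_mem_open (hKU hx) hU
    exact Set.mem_iUnion.2 ⟨n, by rwa [Set.mem_ofPred_eq, mem_cylinder_iff_eq.1 hxy]⟩
  have hmono : Monotone fun N => {x | cylinder x N ⊆ U} := fun _ _ hle _ hx =>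
    (cylinder_anti _ hle).trans hx
  exact hK.elim_directed_cover _ hopen hcover hmono.directed_le

lemma seg_length (a : Pt) (n : ℕ) : (seg a n).length = n := by
  simp [seg]

lemma seg_prefix (a : Pt) {m n : ℕ} (h : m ≤ n) : seg a m <+: seg a n := by
  have : seg a m = (seg a n).take m := by
    simp [seg, ← List.map_take, List.take_range, h]
  exact this ▸ List.take_prefix _ _

lemma seg_eq_seg_iff {a b : Pt} {n : ℕ} : seg a n = seg b n ↔ a ∈ cylinder b n := by
  simp [seg, List.map_inj_left]

lemma isLocallyConstant_seg (n : ℕ) : IsLocallyConstant fun a : Pt => seg a n :=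
  (IsLocallyConstant.iff_exists_open _).2 fun x =>
    ⟨cylinder x n, isOpen_cylinder _ x n, self_mem_cylinder x n, fun _ h => seg_eq_seg_iff.2 h⟩

lemma branches_eq_iInter (T : Set Str) : branches T = ⋂ n, (fun a => seg a n) ⁻¹' T := by
  ext a
  simp [branches]

lemma isClosed_branches (T : Set Str) : IsClosed (branches T) := by
  rw [branches_eq_iInter]
  exact isClosed_iInter fun n => ⟨isLocallyConstant_seg n Tᶜ⟩

lemma isCompact_branches (T : Set Str) : IsCompact (branches T) :=
  (isClosed_branches T).isCompact

lemma branches_inter (S T : Set Str) : branches (S ∩ T) = branches S ∩ branches T := by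
  ext a
  simp [branches, forall_and]

lemma branches_Tres_seg (T : Set Str) (y : Pt) (n : ℕ) :
    branches (Tres T (seg y n)) = branches T ∩ cylinder y n := by
  ext a
  simp only [branches, Tres, Set.mem_ofPred_eq, Set.mem_inter_iff, ← seg_eq_seg_iff, forall_and]
  refine and_congr_right fun _ => ⟨fun h => ?_, fun h m => ?_⟩
  · rcases h n with h' | h'
    · exact (h'.eq_of_length (by simp [seg_length])).symm
    · exact h'.eq_of_length (by simp [seg_length])
  · rcases le_total m n with hmn | hnm
    · exact Or.inr (h ▸ seg_prefix a hmn)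
    · exact Or.inl (h ▸ seg_prefix a hnm)

lemma seg_getD_eq_take {t : Str} {n : ℕ} (h : n ≤ t.length) :
    seg (fun i => t.getD i false) n = t.take n := by
  apply List.ext_getElem
  · simp [seg, h]
  · intro i hi _
    simp [seg, List.getElem?_eq_getElem (hi.trans_le (seg_length _ n ▸ h))]

theorem IsTree.branches_nonempty {T : Set Str} (hT : IsTree T) (hinf : T.Infinite) :
    (branches T).Nonempty := by
  have hlong : ∀ n, ∃ t ∈ T, n ≤ t.length := fun n => by
    by_contra! h
    exact hinf ((List.finite_length_le Bool n).subset fun t ht => (h t ht).le)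
  have hclosed : ∀ n, IsClosed ((fun a => seg a n) ⁻¹' T) := fun n =>
    ⟨isLocallyConstant_seg n Tᶜ⟩
  rw [branches_eq_iInter]
  refine IsCompact.nonempty_iInter_of_sequence_nonempty_isCompact_isClosed _
    (fun n a ha => hT (seg_prefix a n.le_succ) ha) (fun n => ?_) (hclosed 0).isCompact hclosed
  obtain ⟨t, ht, hn⟩ := hlong n
  exact ⟨fun i => t.getD i false, by
    rw [Set.mem_preimage, seg_getD_eq_take hn]
    exact hT (List.take_prefix n t) ht⟩

theorem ad_of_disjoint_branches {S T : Set Str} (hS : IsTree S) (hT : IsTree T)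
    (h : Disjoint (branches S) (branches T)) : AD S T := by
  by_contra hinf
  have hST : IsTree (S ∩ T) := fun _ _ hst hmem => ⟨hS hst hmem.1, hT hst hmem.2⟩
  obtain ⟨a, ha⟩ := hST.branches_nonempty hinf
  rw [branches_inter] at ha
  exact Set.disjoint_left.1 h ha.1 ha.2

lemma ClopenIn.compl {A B : Set Pt} (h : ClopenIn A B) : ClopenIn Aᶜ B :=
  IsClopen.compl h

lemma ClopenIn.isCompact_inter {A B : Set Pt} (hB : IsCompact B) (h : ClopenIn A B) :
    IsCompact (B ∩ A) := by
  have := isCompact_iff_compactSpace.1 hB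
  rw [← Subtype.image_preimage_coe]
  exact h.isClosed.isCompact.image continuous_subtype_val

lemma ClopenIn.exists_cylinder_subset {A B : Set Pt} (hB : IsCompact B) (h : ClopenIn A B) :
    ∃ N, ∀ y ∈ B ∩ A, B ∩ cylinder y N ⊆ A := by
  have hout : IsOpen (B ∩ Aᶜ)ᶜ := (h.compl.isCompact_inter hB).isClosed.isOpen_compl
  obtain ⟨N, hN⟩ := (h.isCompact_inter hB).exists_cylinder_subset hout
    fun y hy hy' => hy'.2 hy.2
  exact ⟨N, fun y hy z ⟨hzB, hzy⟩ => by_contra fun hzA => hN y hy hzy ⟨hzB, hzA⟩⟩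

def IsFiniteDisjointUnion (P : Set (Set Str)) (A : Set Pt) : Prop :=
  ∃ R ⊆ P, R.Finite ∧ R.PairwiseDisjoint branches ∧ A = ⋃ T ∈ R, branches T

lemma isFiniteDisjointUnion_branches {P : Set (Set Str)} {T : Set Str} (hT : T ∈ P) :
    IsFiniteDisjointUnion P (branches T) :=
  ⟨{T}, by simpa using hT, Set.finite_singleton T, Set.pairwiseDisjoint_singleton _ _, by simp⟩

lemma isFiniteDisjointUnion_of_clopenIn {P : Set (Set Str)} {X : Set Str}
    (hX : ∀ s ∈ X, Tres X s ∈ P) {A : Set Pt} (hA : A ⊆ branches X)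
    (h : ClopenIn A (branches X)) : IsFiniteDisjointUnion P A := by
  obtain ⟨N, hN⟩ := h.exists_cylinder_subset (isCompact_branches X)
  rw [Set.inter_eq_right.2 hA] at hN
  refine ⟨(fun y => Tres X (seg y N)) '' A, ?_, ?_, ?_, ?_⟩
  · rintro _ ⟨y, hy, rfl⟩
    exact hX _ (hA hy N)
  · refine ((List.finite_length_eq Bool N).image (Tres X)).subset ?_
    rintro _ ⟨y, -, rfl⟩
    exact ⟨_, seg_length y N, rfl⟩
  · rintro _ ⟨y, -, rfl⟩ _ ⟨z, -, rfl⟩ hne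
    simp only [Function.onFun, branches_Tres_seg]
    refine Set.disjoint_left.2 fun a ha hb => hne ?_
    change Tres X (seg y N) = Tres X (seg z N)
    rw [← seg_eq_seg_iff.2 ha.2, ← seg_eq_seg_iff.2 hb.2]
  · ext a
    simp only [Set.mem_iUnion, Set.mem_image, exists_prop, exists_exists_and_eq_and,
      branches_Tres_seg]
    exact ⟨fun ha => ⟨a, ha, hA ha, self_mem_cylinder a N⟩, fun ⟨y, hy, ha⟩ => hN y hy ha⟩

theorem RegularPTF.isFiniteDisjointUnion_inter {P : Set (Set Str)} (hreg : RegularPTF P)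
    (hP : IsPTF P) {S T : Set Str} (hS : S ∈ P) (hT : T ∈ P) :
    IsFiniteDisjointUnion P (branches S ∩ branches T) := by
  rcases hreg S hS T hT with h | h
  · exact isFiniteDisjointUnion_of_clopenIn (hP.2.2 S hS) Set.inter_subset_left h
  · exact isFiniteDisjointUnion_of_clopenIn (hP.2.2 T hT) Set.inter_subset_right h

theorem IsFiniteDisjointUnion.inter_left {P : Set (Set Str)} {A C : Set Pt}
    (hA : IsFiniteDisjointUnion P A) (hC : ∀ T ∈ P, IsFiniteDisjointUnion P (C ∩ branches T)) :
    IsFiniteDisjointUnion P (C ∩ A) := by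
  obtain ⟨R, hRP, hRfin, hRdisj, rfl⟩ := hA
  choose! F hFP hFfin hFdisj hFeq using hC
  refine ⟨⋃ T ∈ R, F T, Set.iUnion₂_subset fun T hT => hFP T (hRP hT),
    hRfin.biUnion fun T hT => hFfin T (hRP hT), ?_, ?_⟩
  · refine Set.PairwiseDisjoint.biUnion ?_ fun T hT => hFdisj T (hRP hT)
    refine hRdisj.mono_on fun T hT => ?_
    change (⋃ W ∈ F T, branches W) ⊆ branches T
    rw [← hFeq T (hRP hT)]
    exact Set.inter_subset_right
  · simp only [Set.inter_iUnion₂, Set.biUnion_iUnion]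
    exact Set.iUnion₂_congr fun T hT => hFeq T (hRP hT)

theorem isFiniteDisjointUnion_iInter_branches {P : Set (Set Str)} (hP : IsPTF P)
    (hreg : RegularPTF P) {k : ℕ} (S : Fin (k + 1) → Set Str) (hS : ∀ i, S i ∈ P) :
    IsFiniteDisjointUnion P (⋂ i, branches (S i)) := by
  induction k with
  | zero =>
    convert isFiniteDisjointUnion_branches (hS 0)
    ext
    simp [Fin.forall_fin_one]
  | succ k ih =>
    have hsplit :
        ⋂ i, branches (S i) = branches (S 0) ∩ ⋂ i : Fin (k + 1), branches (S i.succ) := by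
      ext a
      simp [Fin.forall_fin_succ]
    rw [hsplit]
    exact (ih _ fun i => hS i.succ).inter_left fun T hT =>
      hreg.isFiniteDisjointUnion_inter hP (hS 0) hT

/-- Lemma 2.7 (regfn) (2): in a regular perfect-tree forcing notion, a
finite intersection of branch sets is a finite union of branch sets of
pairwise a.d. trees of the forcing. -/
theorem stmt8 (P : Set (Set Str)) (hP : IsPTF P) (hreg : RegularPTF P)
    (k : ℕ) (hk : 0 < k) (S : Fin k → Set Str) (hS : ∀ i, S i ∈ P) :
    ∃ R ⊆ P, R.Finite ∧ R.Pairwise AD ∧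
      (⋂ i, branches (S i)) = ⋃ T ∈ R, branches T := by
  obtain ⟨m, rfl⟩ : ∃ m, k = m + 1 := ⟨k - 1, (Nat.succ_pred_eq_of_pos hk).symm⟩
  obtain ⟨R, hRP, hRfin, hRdisj, heq⟩ := isFiniteDisjointUnion_iInter_branches hP hreg S hS
  refine ⟨R, hRP, hRfin, fun W hW W' hW' hne => ?_, heq⟩
  exact ad_of_disjoint_branches (hP.2.1 W (hRP hW)).2.1 (hP.2.1 W' (hRP hW')).2.1
    (hRdisj hW hW' hne)

end
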